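/- arXiv:1106.5468 — 6 statements merged into one kernel-verified Lean document; each statement's English description precedes it below -/
import Mathlib

section
/- Let G be a real 2n×2n matrix that is symmetric, positive definite, and symplectic. Then there exists a symplectic matrix S ∈ Sp(2n,ℝ) such that G = (S⁻¹)ᵀS⁻¹. Consequently, for every z₀ ∈ ℝ²ⁿ and every ħ > 0, the ellipsoid {z ∈ ℝ²ⁿ : ⟨G(z−z₀), z−z₀⟩ ≤ ħ} equals the image of the closed ball of radius √ħ centered at the origin under the affine map z ↦ Sz + z₀, i.e. it is a quantum blob. -/
open Matrix

noncomputable section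

/-- The standard symplectic matrix `J = ((0, I), (-I, 0))`. -/
def stdJ (n : ℕ) : Matrix (Fin n ⊕ Fin n) (Fin n ⊕ Fin n) ℝ :=
  Matrix.fromBlocks 0 1 (-1) 0

/-- A real `2n × 2n` matrix is symplectic if `Sᵀ J S = J`. -/
def IsSymplectic {n : ℕ} (S : Matrix (Fin n ⊕ Fin n) (Fin n ⊕ Fin n) ℝ) : Prop :=
  Sᵀ * stdJ n * S = stdJ n

/-!
The positive square root `A = √G` is itself symplectic. Indeed `G ∈ Sp` gives
`G⁻¹ = Jᵀ G J`; as `J` is orthogonal and positive square roots are unique,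
`A⁻¹ = √(G⁻¹) = Jᵀ A J`, i.e. `A J A = J`. With `S = A⁻¹` we get `G = Aᵀ A = (S⁻¹)ᵀ S⁻¹`, and
`⟨G v, v⟩ = |S⁻¹ v|²` makes the ellipsoid the preimage of the ball under `z ↦ S⁻¹ (z - z₀)`.
-/

open scoped MatrixOrder

namespace Matrix

variable {m : Type*} [Fintype m]

lemma transpose_mul_self_mulVec_dotProduct {k R : Type*} [Fintype k] [CommSemiring R]
    (B : Matrix k m R) (v : m → R) : (Bᵀ * B) *ᵥ v ⬝ᵥ v = B *ᵥ v ⬝ᵥ B *ᵥ v := by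
  rw [← mulVec_mulVec, dotProduct_comm, dotProduct_mulVec, vecMul_transpose]

lemma setOf_transpose_inv_mul_inv_le_eq_image [DecidableEq m] {S : Matrix m m ℝ}
    (hS : IsUnit S.det) (z₀ : m → ℝ) {r : ℝ} (hr : 0 ≤ r) :
    {z | ((S⁻¹)ᵀ * S⁻¹) *ᵥ (z - z₀) ⬝ᵥ (z - z₀) ≤ r} =
      (fun z => S *ᵥ z + z₀) '' {z | √(z ⬝ᵥ z) ≤ √r} := by
  rw [Set.image_eq_preimage_of_inverse (f := fun z => S *ᵥ z + z₀)
    (g := fun w => S⁻¹ *ᵥ (w - z₀))]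
  · ext w
    simp only [Set.mem_ofPred_eq, Set.mem_preimage, transpose_mul_self_mulVec_dotProduct,
      Real.sqrt_le_sqrt_iff hr]
  · intro z
    simp [mulVec_mulVec, nonsing_inv_mul _ hS]
  · intro w
    simp [mulVec_mulVec, mul_nonsing_inv _ hS]

variable [DecidableEq m]

lemma sqrt_transpose_mul_mul {U M : Matrix m m ℝ} (hU : U * Uᵀ = 1) (hM : M.PosSemidef) :
    CFC.sqrt (Uᵀ * M * U) = Uᵀ * CFC.sqrt M * U := by
  refine CFC.sqrt_unique ?_ ?_
  · calc Uᵀ * CFC.sqrt M * U * (Uᵀ * CFC.sqrt M * U)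
        = Uᵀ * (CFC.sqrt M * (U * Uᵀ) * CFC.sqrt M) * U := by simp only [Matrix.mul_assoc]
      _ = Uᵀ * M * U := by rw [hU, Matrix.mul_one, CFC.sqrt_mul_sqrt_self M hM.nonneg]
  · simpa using ((CFC.sqrt_nonneg M).posSemidef.conjTranspose_mul_mul_same U).nonneg

lemma sqrt_nonsing_inv {M : Matrix m m ℝ} (hM : M.PosSemidef) :
    CFC.sqrt M⁻¹ = (CFC.sqrt M)⁻¹ :=
  CFC.sqrt_unique (by rw [← mul_inv_rev, CFC.sqrt_mul_sqrt_self M hM.nonneg])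
    (CFC.sqrt_nonneg M).posSemidef.inv.nonneg

end Matrix

namespace SymplecticGroup

variable {l : Type*} [Fintype l] [DecidableEq l]

lemma J_mul_transpose_J (R : Type*) [CommRing R] : J l R * (J l R)ᵀ = 1 := by
  rw [J_transpose, Matrix.mul_neg, J_squared, neg_neg]

lemma nonsing_inv_mem {R : Type*} [CommRing R] {A : Matrix (l ⊕ l) (l ⊕ l) R}
    (hA : A ∈ symplecticGroup l R) : A⁻¹ ∈ symplecticGroup l R :=
  coe_inv' ⟨A, hA⟩ ▸ (⟨A, hA⟩⁻¹ : symplecticGroup l R).2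

lemma sqrt_mem {G : Matrix (l ⊕ l) (l ⊕ l) ℝ} (hG : G.PosSemidef)
    (hGs : G ∈ symplecticGroup l ℝ) : CFC.sqrt G ∈ symplecticGroup l ℝ := by
  set A := CFC.sqrt G
  have hAT : Aᵀ = A := (CFC.sqrt_nonneg G).posSemidef.isHermitian.eq
  have hA : IsUnit A.det := by
    have : IsUnit (A * A).det := by
      rw [CFC.sqrt_mul_sqrt_self G hG.nonneg]
      exact symplectic_det hGs
    rw [det_mul] at this
    exact isUnit_of_mul_isUnit_left this
  have hGT : Gᵀ = G := hG.isHermitian.eq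
  have hGinv : G⁻¹ = (J l ℝ)ᵀ * G * J l ℝ := by
    rw [inv_eq_symplectic_inv G hGs, J_transpose, hGT]
  have hAinv : A⁻¹ = (J l ℝ)ᵀ * A * J l ℝ := by
    rw [← sqrt_nonsing_inv hG, hGinv, sqrt_transpose_mul_mul (J_mul_transpose_J ℝ) hG]
  rw [mem_iff, hAT]
  calc A * J l ℝ * A = -(A * (J l ℝ)ᵀ * A) := by
        rw [J_transpose, Matrix.mul_neg, Matrix.neg_mul, neg_neg]
    _ = -(A * (J l ℝ)ᵀ * A * (J l ℝ * (J l ℝ)ᵀ)) := by rw [J_mul_transpose_J, Matrix.mul_one]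
    _ = -(A * A⁻¹ * (J l ℝ)ᵀ) := by rw [hAinv]; simp only [Matrix.mul_assoc]
    _ = J l ℝ := by rw [mul_nonsing_inv _ hA, Matrix.one_mul, J_transpose, neg_neg]

end SymplecticGroup

lemma stdJ_eq_neg_J (n : ℕ) : stdJ n = -J (Fin n) ℝ := by
  rw [stdJ, J, fromBlocks_neg]
  simp

lemma isSymplectic_iff_mem_symplecticGroup {n : ℕ}
    {S : Matrix (Fin n ⊕ Fin n) (Fin n ⊕ Fin n) ℝ} :
    IsSymplectic S ↔ S ∈ symplecticGroup (Fin n) ℝ := by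
  rw [IsSymplectic, SymplecticGroup.mem_iff', stdJ_eq_neg_J, Matrix.mul_neg, Matrix.neg_mul,
    neg_inj]

theorem quantum_blob_of_posdef_symplectic_general {n : ℕ}
    (G : Matrix (Fin n ⊕ Fin n) (Fin n ⊕ Fin n) ℝ)
    (hGpos : G.PosDef) (hGsympl : IsSymplectic G) :
    ∃ S : Matrix (Fin n ⊕ Fin n) (Fin n ⊕ Fin n) ℝ, IsSymplectic S ∧
      G = (S⁻¹)ᵀ * S⁻¹ ∧
      ∀ (z₀ : (Fin n ⊕ Fin n) → ℝ) (hb : ℝ), 0 < hb →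
        {z : (Fin n ⊕ Fin n) → ℝ | G.mulVec (z - z₀) ⬝ᵥ (z - z₀) ≤ hb} =
          (fun z => S.mulVec z + z₀) ''
            {z : (Fin n ⊕ Fin n) → ℝ | Real.sqrt (z ⬝ᵥ z) ≤ Real.sqrt hb} := by
  set A := CFC.sqrt G
  have hA : A ∈ symplecticGroup (Fin n) ℝ :=
    SymplecticGroup.sqrt_mem hGpos.posSemidef (isSymplectic_iff_mem_symplecticGroup.mp hGsympl)
  have hAdet : IsUnit A.det := SymplecticGroup.symplectic_det hA
  have hAT : Aᵀ = A := (CFC.sqrt_nonneg G).posSemidef.isHermitian.eq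
  have hGA : G = (A⁻¹⁻¹)ᵀ * A⁻¹⁻¹ := by
    rw [nonsing_inv_nonsing_inv A hAdet, hAT, CFC.sqrt_mul_sqrt_self G hGpos.posSemidef.nonneg]
  refine ⟨A⁻¹, isSymplectic_iff_mem_symplecticGroup.mpr (SymplecticGroup.nonsing_inv_mem hA),
    hGA, fun z₀ hb hb_pos => ?_⟩
  rw [hGA]
  exact setOf_transpose_inv_mul_inv_le_eq_image (isUnit_nonsing_inv_det A hAdet) z₀ hb_pos.le

/-- If `G` is symmetric, positive definite and symplectic, then `G = (S⁻¹)ᵀ S⁻¹` for some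
symplectic `S`, and the ellipsoid `⟨G(z - z₀), z - z₀⟩ ≤ hb` is the quantum blob
`QB(z₀, S)`, i.e. the image of the closed ball of radius `√hb` under `z ↦ Sz + z₀`. -/
theorem quantum_blob_of_posdef_symplectic {n : ℕ} (hn : 1 ≤ n)
    (G : Matrix (Fin n ⊕ Fin n) (Fin n ⊕ Fin n) ℝ)
    (hGsymm : G.IsSymm) (hGpos : G.PosDef) (hGsympl : IsSymplectic G) :
    ∃ S : Matrix (Fin n ⊕ Fin n) (Fin n ⊕ Fin n) ℝ, IsSymplectic S ∧
      G = (S⁻¹)ᵀ * S⁻¹ ∧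
      ∀ (z₀ : (Fin n ⊕ Fin n) → ℝ) (hb : ℝ), 0 < hb →
        {z : (Fin n ⊕ Fin n) → ℝ | G.mulVec (z - z₀) ⬝ᵥ (z - z₀) ≤ hb} =
          (fun z => S.mulVec z + z₀) ''
            {z : (Fin n ⊕ Fin n) → ℝ | Real.sqrt (z ⬝ᵥ z) ≤ Real.sqrt hb} :=
  quantum_blob_of_posdef_symplectic_general G hGpos hGsympl
end
end

section
/- Let ħ > 0, let X and Y be real symmetric n×n matrices with X positive definite, and set M = X + iY. Define the squeezed coherent state Φ_M(x) = (πħ)^{−n/4} (det X)^{1/4} e^{−⟨(X+iY)x, x⟩/(2ħ)} on ℝⁿ. Then for every z = (x,p) ∈ ℝ²ⁿ, the Wigner transform satisfies WΦ_M(z) = (πħ)^{−n} e^{−⟨Gz, z⟩/ħ}, where G is the real 2n×2n block matrix G = ((X + Y X⁻¹ Y, Y X⁻¹),(X⁻¹ Y, X⁻¹)). -/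
/-!
Multiplying `Φ_M(x + y/2)` by `conj Φ_M(x - y/2)` gives, by the parallelogram law for `X` and
polarization for `Y`, the factor `e^{-⟨Xx, x⟩/ħ}` times a Gaussian in `y` with quadratic part
`⟨Xy, y⟩/(4ħ)` and linear part `-(i/ħ)⟨Yx + p, y⟩`. Writing `X = MᵀM` and substituting
`y = M⁻¹u` turns it into a standard Gaussian, whose integral is `e^{-⟨X⁻¹(Yx + p), Yx + p⟩/ħ}` up
to the constant `(4πħ)^{n/2} (det X)^{-1/2}`, which cancels the normalisation of `Φ_M`.
Finally `⟨Gz, z⟩ = ⟨Xx, x⟩ + ⟨X⁻¹(Yx + p), Yx + p⟩`.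
-/

open Matrix MeasureTheory

noncomputable section

/-- The Wigner transform of `ψ : ℝⁿ → ℂ`:
`Wψ(x,p) = (2πħ)⁻ⁿ ∫ e^{-i p·y/ħ} ψ(x + y/2) conj(ψ(x - y/2)) dy`. -/
def wigner (n : ℕ) (hb : ℝ) (ψ : (Fin n → ℝ) → ℂ) (x p : Fin n → ℝ) : ℂ :=
  (((2 * Real.pi * hb) ^ n : ℝ)⁻¹ : ℂ) *
    ∫ y : Fin n → ℝ,
      Complex.exp (-(Complex.I * ((p ⬝ᵥ y : ℝ) : ℂ)) / (hb : ℂ)) *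
        ψ (x + y / 2) * (starRingEnd ℂ) (ψ (x - y / 2))

/-- The squeezed coherent state
`Φ_M(x) = (πħ)^{-n/4} (det X)^{1/4} e^{-⟨(X+iY)x, x⟩/(2ħ)}` with `M = X + iY`. -/
def squeezed (n : ℕ) (hb : ℝ) (X Y : Matrix (Fin n) (Fin n) ℝ) (x : Fin n → ℝ) : ℂ :=
  (((Real.pi * hb) ^ (-(n : ℝ) / 4) * X.det ^ ((1 : ℝ) / 4) : ℝ) : ℂ) *
    Complex.exp (-(((X.mulVec x ⬝ᵥ x : ℝ) : ℂ) +
      Complex.I * ((Y.mulVec x ⬝ᵥ x : ℝ) : ℂ)) / (2 * (hb : ℂ)))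

open Complex
open scoped Real

namespace Matrix

variable {ι R : Type*} [Fintype ι] [CommRing R]

lemma IsSymm.mulVec_dotProduct_comm {A : Matrix ι ι R} (hA : A.IsSymm) (a b : ι → R) :
    A *ᵥ a ⬝ᵥ b = A *ᵥ b ⬝ᵥ a := by
  rw [dotProduct_comm, dotProduct_mulVec, ← mulVec_transpose, hA.eq]

lemma parallelogram_mulVec_dotProduct (A : Matrix ι ι R) (x y : ι → R) :
    A *ᵥ (x + y) ⬝ᵥ (x + y) + A *ᵥ (x - y) ⬝ᵥ (x - y) = 2 * (A *ᵥ x ⬝ᵥ x + A *ᵥ y ⬝ᵥ y) := by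
  simp only [mulVec_add, mulVec_sub, add_dotProduct, sub_dotProduct, dotProduct_add,
    dotProduct_sub]
  ring

lemma IsSymm.polarization_mulVec_dotProduct {A : Matrix ι ι R} (hA : A.IsSymm) (x y : ι → R) :
    A *ᵥ (x + y) ⬝ᵥ (x + y) - A *ᵥ (x - y) ⬝ᵥ (x - y) = 4 * (A *ᵥ x ⬝ᵥ y) := by
  simp only [mulVec_add, mulVec_sub, add_dotProduct, sub_dotProduct, dotProduct_add,
    dotProduct_sub, hA.mulVec_dotProduct_comm y x]
  ring

lemma fromBlocks_mulVec_sumElim_dotProduct_sumElim {A B Y : Matrix ι ι R} (hY : Y.IsSymm)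
    (x p : ι → R) :
    fromBlocks (A + Y * B * Y) (Y * B) (B * Y) B *ᵥ Sum.elim x p ⬝ᵥ Sum.elim x p
      = A *ᵥ x ⬝ᵥ x + B *ᵥ (Y *ᵥ x + p) ⬝ᵥ (Y *ᵥ x + p) := by
  simp only [fromBlocks_mulVec, sumElim_dotProduct_sumElim, Sum.elim_comp_inl,
    Sum.elim_comp_inr, add_mulVec, ← mulVec_mulVec, mulVec_add, add_dotProduct, dotProduct_add,
    hY.mulVec_dotProduct_comm _ x]
  rw [dotProduct_comm (B *ᵥ p) (Y *ᵥ x), dotProduct_comm (B *ᵥ (Y *ᵥ x)) (Y *ᵥ x)]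
  ring

end Matrix

lemma Pi.div_two_eq_smul {ι K : Type*} [Field K] (y : ι → K) : y / 2 = (2⁻¹ : K) • y := by
  ext i; simp [div_eq_inv_mul]

lemma Complex.ofReal_cpow_natCast_div_two {a : ℝ} (ha : 0 ≤ a) (n : ℕ) :
    (a : ℂ) ^ ((n : ℂ) / 2) = ((√a ^ n : ℝ) : ℂ) := by
  rw [show ((n : ℂ) / 2) = ((n / 2 : ℝ) : ℂ) by push_cast; ring, ← ofReal_cpow ha,
    Real.sqrt_eq_rpow, ← Real.rpow_mul_natCast ha]
  ring_nf

theorem integral_cexp_neg_mul_dotProduct_self_add {ι : Type*} [Fintype ι] {c : ℝ} (hc : 0 < c)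
    (d : ℂ) (a : ι → ℝ) :
    ∫ u : ι → ℝ, cexp (-c * ((u ⬝ᵥ u : ℝ) : ℂ) + d * ((a ⬝ᵥ u : ℝ) : ℂ))
      = ((√(π / c) ^ Fintype.card ι : ℝ) : ℂ) * cexp (d ^ 2 * ((a ⬝ᵥ a : ℝ) : ℂ) / (4 * c)) := by
  have hc' : 0 < (c : ℂ).re := by simpa using hc
  have h := GaussianFourier.integral_cexp_neg_mul_sum_add hc' (fun i ↦ d * a i)
  simp only [dotProduct, ofReal_sum, ofReal_mul, ← sq, ofReal_pow, mul_pow, Finset.mul_sum,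
    mul_assoc] at h ⊢
  rw [h, ← ofReal_div, ofReal_cpow_natCast_div_two (by positivity), ofReal_pow]

namespace Matrix

variable {ι : Type*} [Fintype ι] [DecidableEq ι]

theorem integral_comp_mulVec {E : Type*} [NormedAddCommGroup E] [NormedSpace ℝ E]
    {M : Matrix ι ι ℝ} (hM : M.det ≠ 0) (g : (ι → ℝ) → E) :
    ∫ u, g (M *ᵥ u) = |M.det|⁻¹ • ∫ y, g y := by
  let e := (M.toLinearEquiv' (M.invertibleOfIsUnitDet hM.isUnit)).toContinuousLinearEquiv
  have he : MeasurableEmbedding (toLin' M) := e.toHomeomorph.measurableEmbedding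
  simp_rw [← toLin'_apply, ← he.integral_map, Real.map_matrix_volume_pi_eq_smul_volume_pi hM,
    integral_smul_measure, ENNReal.toReal_ofReal (abs_nonneg _), abs_inv]

theorem integral_cexp_neg_mul_transpose_mul_mulVec_dotProduct_add {M : Matrix ι ι ℝ}
    (hM : M.det ≠ 0) {c : ℝ} (hc : 0 < c) (d : ℂ) (b : ι → ℝ) :
    ∫ y : ι → ℝ, cexp (-c * ((Mᵀ * M) *ᵥ y ⬝ᵥ y : ℝ) + d * (b ⬝ᵥ y : ℝ))
      = ((√(π / c) ^ Fintype.card ι / |M.det| : ℝ) : ℂ) *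
        cexp (d ^ 2 * ((Mᵀ * M)⁻¹ *ᵥ b ⬝ᵥ b : ℝ) / (4 * c)) := by
  have hquad (u : ι → ℝ) : (Mᵀ * M) *ᵥ (M⁻¹ *ᵥ u) ⬝ᵥ (M⁻¹ *ᵥ u) = u ⬝ᵥ u := by
    rw [mulVec_mulVec, mul_assoc, mul_nonsing_inv _ hM.isUnit, mul_one, mulVec_transpose,
      ← dotProduct_mulVec, mulVec_mulVec, mul_nonsing_inv _ hM.isUnit, one_mulVec]
  have hinv : (Mᵀ * M)⁻¹ *ᵥ b ⬝ᵥ b = b ᵥ* M⁻¹ ⬝ᵥ b ᵥ* M⁻¹ := by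
    rw [mul_inv_rev, ← mulVec_mulVec, dotProduct_comm, dotProduct_mulVec, ← transpose_nonsing_inv,
      mulVec_transpose]
  have hdet : (M⁻¹).det ≠ 0 := by simpa [det_nonsing_inv] using hM
  have hsubst := integral_comp_mulVec hdet
    (fun y ↦ cexp (-c * ((Mᵀ * M) *ᵥ y ⬝ᵥ y : ℝ) + d * (b ⬝ᵥ y : ℝ)))
  simp only [hquad, dotProduct_mulVec b, integral_cexp_neg_mul_dotProduct_self_add hc,
    det_nonsing_inv, Ring.inverse_eq_inv', abs_inv, inv_inv] at hsubst
  rw [← inv_smul_eq_iff₀ (by positivity)] at hsubst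
  rw [← hsubst, hinv, Complex.real_smul]
  push_cast
  ring

open scoped MatrixOrder in
theorem PosDef.integral_cexp_neg_mul_mulVec_dotProduct_add {X : Matrix ι ι ℝ} (hX : X.PosDef)
    {c : ℝ} (hc : 0 < c) (d : ℂ) (b : ι → ℝ) :
    ∫ y : ι → ℝ, cexp (-c * (X *ᵥ y ⬝ᵥ y : ℝ) + d * (b ⬝ᵥ y : ℝ))
      = ((√(π / c) ^ Fintype.card ι / √X.det : ℝ) : ℂ) *
        cexp (d ^ 2 * (X⁻¹ *ᵥ b ⬝ᵥ b : ℝ) / (4 * c)) := by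
  obtain ⟨M, rfl⟩ := CStarAlgebra.nonneg_iff_eq_star_mul_self.mp hX.posSemidef.nonneg
  have hdet : (star M * M).det = M.det ^ 2 := by
    rw [star_eq_conjTranspose, conjTranspose_eq_transpose_of_trivial, det_mul, det_transpose, sq]
  have hM : M.det ≠ 0 := by simpa [hdet] using hX.det_pos.ne'
  rw [hdet, Real.sqrt_sq_eq_abs, star_eq_conjTranspose, conjTranspose_eq_transpose_of_trivial]
  exact integral_cexp_neg_mul_transpose_mul_mulVec_dotProduct_add hM hc d b

end Matrix

lemma cexp_mul_squeezed_mul_conj_squeezed {n : ℕ} (hb : ℝ) (X : Matrix (Fin n) (Fin n) ℝ)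
    {Y : Matrix (Fin n) (Fin n) ℝ} (hY : Y.IsSymm) (x p y : Fin n → ℝ) :
    cexp (-(I * (p ⬝ᵥ y : ℝ)) / hb) * squeezed n hb X Y (x + y / 2) *
        starRingEnd ℂ (squeezed n hb X Y (x - y / 2))
      = (((π * hb) ^ (-(n : ℝ) / 4) * X.det ^ ((1 : ℝ) / 4)) ^ 2 : ℝ) *
          cexp (-(X *ᵥ x ⬝ᵥ x : ℝ) / hb) *
        cexp (-((4 * hb)⁻¹ : ℝ) * (X *ᵥ y ⬝ᵥ y : ℝ) + -(I / hb) * ((Y *ᵥ x + p) ⬝ᵥ y : ℝ)) := by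
  have hX : X *ᵥ (x + y / 2) ⬝ᵥ (x + y / 2) + X *ᵥ (x - y / 2) ⬝ᵥ (x - y / 2)
      = 2 * (X *ᵥ x ⬝ᵥ x) + (X *ᵥ y ⬝ᵥ y) / 2 := by
    rw [parallelogram_mulVec_dotProduct, Pi.div_two_eq_smul, mulVec_smul, smul_dotProduct,
      dotProduct_smul, smul_eq_mul, smul_eq_mul]
    ring
  have hY : Y *ᵥ (x + y / 2) ⬝ᵥ (x + y / 2) - Y *ᵥ (x - y / 2) ⬝ᵥ (x - y / 2)
      = 2 * (Y *ᵥ x ⬝ᵥ y) := by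
    rw [hY.polarization_mulVec_dotProduct, Pi.div_two_eq_smul, dotProduct_smul, smul_eq_mul]
    ring
  simp only [squeezed, map_mul, conj_ofReal, ← exp_conj, map_div₀, map_neg, map_add, conj_I,
    map_ofNat, ofReal_pow]
  have hcomb (u v w N : ℂ) : cexp u * (N * cexp v) * (N * cexp w) = N ^ 2 * cexp (u + v + w) := by
    rw [exp_add, exp_add]; ring
  rw [hcomb, mul_assoc _ (cexp _), ← exp_add]
  congr 2
  have hXC := congrArg ((↑) : ℝ → ℂ) hX
  have hYC := congrArg ((↑) : ℝ → ℂ) hY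
  push_cast [add_dotProduct] at hXC hYC ⊢
  linear_combination (-1 / (2 * (hb : ℂ))) * hXC + (-I / (2 * (hb : ℂ))) * hYC

lemma sq_rpow_neg_div_four_mul_rpow_one_div_four {a t : ℝ} (ha : 0 ≤ a) (ht : 0 ≤ t) (n : ℕ) :
    (a ^ (-(n : ℝ) / 4) * t ^ ((1 : ℝ) / 4)) ^ 2 = √t / √a ^ n := by
  rw [div_eq_mul_inv √t, mul_pow, ← Real.rpow_mul_natCast ha, ← Real.rpow_mul_natCast ht,
    Real.sqrt_eq_rpow, Real.sqrt_eq_rpow, ← Real.rpow_mul_natCast ha, ← Real.rpow_neg ha]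
  ring_nf

lemma wigner_squeezed_prefactor {hb t : ℝ} (hhb : 0 < hb) (ht : 0 < t) (n : ℕ) :
    ((2 * π * hb) ^ n)⁻¹ * ((π * hb) ^ (-(n : ℝ) / 4) * t ^ ((1 : ℝ) / 4)) ^ 2 *
        (√(π / (4 * hb)⁻¹) ^ n / √t) = ((π * hb) ^ n)⁻¹ := by
  have hsqrt : √(π / (4 * hb)⁻¹) = 2 * √(π * hb) := by
    rw [show π / (4 * hb)⁻¹ = 2 ^ 2 * (π * hb) by field_simp; ring,
      Real.sqrt_mul (by positivity), Real.sqrt_sq zero_le_two]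
  rw [sq_rpow_neg_div_four_mul_rpow_one_div_four (by positivity) ht.le, hsqrt, mul_assoc 2 π]
  have hs : 0 < √(π * hb) := by positivity
  set s := √(π * hb)
  rw [show π * hb = s ^ 2 from (Real.sq_sqrt (by positivity)).symm]
  field_simp
  ring

theorem wigner_squeezed_general {n : ℕ} (hb : ℝ) (hhb : 0 < hb)
    (X Y : Matrix (Fin n) (Fin n) ℝ) (hY : Y.IsSymm) (hXpos : X.PosDef) :
    ∀ x p : Fin n → ℝ,
      wigner n hb (squeezed n hb X Y) x p =
        (((Real.pi * hb) ^ n : ℝ)⁻¹ : ℂ) *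
          Complex.exp (-((((Matrix.fromBlocks (X + Y * X⁻¹ * Y) (Y * X⁻¹) (X⁻¹ * Y) X⁻¹).mulVec
            (Sum.elim x p) ⬝ᵥ Sum.elim x p : ℝ)) : ℂ) / (hb : ℂ)) := by
  intro x p
  have hexp : cexp (-(X *ᵥ x ⬝ᵥ x : ℝ) / hb) *
      cexp ((-(I / hb)) ^ 2 * (X⁻¹ *ᵥ (Y *ᵥ x + p) ⬝ᵥ (Y *ᵥ x + p) : ℝ) / (4 * ((4 * hb)⁻¹ : ℝ)))
      = cexp (-(fromBlocks (X + Y * X⁻¹ * Y) (Y * X⁻¹) (X⁻¹ * Y) X⁻¹ *ᵥ Sum.elim x p ⬝ᵥ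
          Sum.elim x p : ℝ) / hb) := by
    rw [fromBlocks_mulVec_sumElim_dotProduct_sumElim hY, ← exp_add]
    congr 1
    have hhb' : (hb : ℂ) ≠ 0 := by exact_mod_cast hhb.ne'
    push_cast
    field_simp
    rw [I_sq]
    ring
  rw [wigner, funext (cexp_mul_squeezed_mul_conj_squeezed hb X hY x p), integral_const_mul,
    hXpos.integral_cexp_neg_mul_mulVec_dotProduct_add (by positivity), Fintype.card_fin, ← hexp,
    ← ofReal_inv ((π * hb) ^ n), ← wigner_squeezed_prefactor hhb hXpos.det_pos n]
  push_cast
  ring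

/-- The Wigner transform of the squeezed coherent state `Φ_M`, `M = X + iY`, is the
Gaussian `(πħ)⁻ⁿ e^{-⟨Gz, z⟩/ħ}` with `G = ((X + Y X⁻¹ Y, Y X⁻¹), (X⁻¹ Y, X⁻¹))`. -/
theorem wigner_squeezed {n : ℕ} (hn : 1 ≤ n) (hb : ℝ) (hhb : 0 < hb)
    (X Y : Matrix (Fin n) (Fin n) ℝ) (hX : X.IsSymm) (hY : Y.IsSymm) (hXpos : X.PosDef) :
    ∀ x p : Fin n → ℝ,
      wigner n hb (squeezed n hb X Y) x p =
        (((Real.pi * hb) ^ n : ℝ)⁻¹ : ℂ) *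
          Complex.exp (-((((Matrix.fromBlocks (X + Y * X⁻¹ * Y) (Y * X⁻¹) (X⁻¹ * Y) X⁻¹).mulVec
            (Sum.elim x p) ⬝ᵥ Sum.elim x p : ℝ)) : ℂ) / (hb : ℂ)) :=
  wigner_squeezed_general hb hhb X Y hY hXpos
end
end

section
/- Let ħ > 0 and let Σ be a real symmetric 2n×2n matrix (the covariance matrix), with entries indexed so that Σ_{j,j} = (Δxⱼ)², Σ_{n+j,n+j} = (Δpⱼ)², and Σ_{j,n+j} = Cov(xⱼ,pⱼ) for 1 ≤ j ≤ n. If the complex 2n×2n matrix Σ + (iħ/2)J is positive semidefinite (as a Hermitian matrix), then the Robertson–Schrödinger inequalities hold: for every j with 1 ≤ j ≤ n, (Δxⱼ)²(Δpⱼ)² ≥ Cov(xⱼ,pⱼ)² + ħ²/4. -/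
/-!
The principal `2 × 2` submatrix of `Σ + (iħ/2)J` on the indices of `xⱼ` and `pⱼ` is
`((Δxⱼ)², Cov(xⱼ,pⱼ) + iħ/2), (Cov(xⱼ,pⱼ) - iħ/2, (Δpⱼ)²))`. It is positive semidefinite, so its
determinant `(Δxⱼ)²(Δpⱼ)² - |Cov(xⱼ,pⱼ) + iħ/2|²` is nonnegative.
-/

open Matrix
open scoped ComplexOrder

noncomputable section

theorem Matrix.PosSemidef.sq_norm_apply_le {ι 𝕜 : Type*} [Fintype ι] [RCLike 𝕜]
    {A : Matrix ι ι 𝕜} (hA : A.PosSemidef) (i j : ι) :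
    ‖A i j‖ ^ 2 ≤ RCLike.re (A i i) * RCLike.re (A j j) := by
  classical
  have hdet := (hA.submatrix ![i, j]).det_nonneg
  simp only [det_fin_two, submatrix_apply, cons_val_zero, cons_val_one] at hdet
  rw [← hA.1.apply j i, RCLike.star_def, RCLike.mul_conj, ← hA.1.coe_re_apply_self i,
    ← hA.1.coe_re_apply_self j] at hdet
  exact_mod_cast sub_nonneg.mp hdet

theorem robertson_schrodinger_general {n : ℕ} (hb : ℝ)
    (Scov : Matrix (Fin n ⊕ Fin n) (Fin n ⊕ Fin n) ℝ)
    (hpos : (Scov.map Complex.ofReal +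
        (((hb / 2 : ℝ) : ℂ) * Complex.I) • (stdJ n).map Complex.ofReal).PosSemidef) :
    ∀ j : Fin n,
      Scov (Sum.inl j) (Sum.inr j) ^ 2 + hb ^ 2 / 4 ≤
        Scov (Sum.inl j) (Sum.inl j) * Scov (Sum.inr j) (Sum.inr j) := by
  intro j
  have h := hpos.sq_norm_apply_le (Sum.inl j) (Sum.inr j)
  simp only [stdJ, Matrix.add_apply, Matrix.smul_apply, map_apply, fromBlocks_apply₁₁,
    fromBlocks_apply₁₂, fromBlocks_apply₂₂, Matrix.zero_apply, one_apply_eq, Complex.ofReal_zero,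
    Complex.ofReal_one, smul_eq_mul, mul_zero, mul_one, add_zero, RCLike.re_to_complex,
    Complex.ofReal_re] at h
  rw [Complex.sq_norm, Complex.normSq_add_mul_I] at h
  linarith

/-- If the Hermitian matrix `Σ + (iħ/2)J` is positive semidefinite, then the
Robertson–Schrödinger inequalities hold:
`(Δxⱼ)²(Δpⱼ)² ≥ Cov(xⱼ,pⱼ)² + ħ²/4` for all `j`, where `(Δxⱼ)² = Σ_{j,j}`,
`(Δpⱼ)² = Σ_{n+j,n+j}` and `Cov(xⱼ,pⱼ) = Σ_{j,n+j}`. -/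
theorem robertson_schrodinger {n : ℕ} (hn : 1 ≤ n) (hb : ℝ) (hhb : 0 < hb)
    (Scov : Matrix (Fin n ⊕ Fin n) (Fin n ⊕ Fin n) ℝ) (hsymm : Scov.IsSymm)
    (hpos : (Scov.map Complex.ofReal +
        (((hb / 2 : ℝ) : ℂ) * Complex.I) • (stdJ n).map Complex.ofReal).PosSemidef) :
    ∀ j : Fin n,
      Scov (Sum.inl j) (Sum.inr j) ^ 2 + hb ^ 2 / 4 ≤
        Scov (Sum.inl j) (Sum.inl j) * Scov (Sum.inr j) (Sum.inr j) :=
  robertson_schrodinger_general hb Scov hpos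
end
end

section
/- Let M be a real symmetric positive-definite 2n×2n matrix and J the standard symplectic matrix. Then every complex eigenvalue of the matrix JM is purely imaginary and nonzero; i.e. each eigenvalue is of the form ±iλ with λ > 0 real. -/
/-!
If `J M v = μ v` with `v ≠ 0`, put `w = M v`. Then `w* J w = μ w* v = μ (v* M v)`.
The left side is purely imaginary because `J` is skew-symmetric, while `v* M v > 0`,
so `Re μ = 0`. Finally `μ ≠ 0` because `J M` is invertible.
-/

open Matrix
open scoped ComplexOrder

noncomputable section

namespace Matrix

variable {ι : Type*} [Fintype ι]

lemma map_ofReal_mul (A B : Matrix ι ι ℝ) :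
    (A * B).map Complex.ofReal = A.map Complex.ofReal * B.map Complex.ofReal :=
  Matrix.map_mul (f := Complex.ofRealHom)

lemma exists_mulVec_eq_smul_of_mem_spectrum {K : Type*} [Field K] [DecidableEq ι]
    {A : Matrix ι ι K} {μ : K} (h : μ ∈ spectrum K A) : ∃ v ≠ 0, A *ᵥ v = μ • v := by
  rw [← spectrum_toLin', ← Module.End.hasEigenvalue_iff_mem_spectrum] at h
  obtain ⟨v, hv⟩ := h.exists_hasEigenvector
  exact ⟨v, hv.2, by simpa using hv.apply_eq_smul⟩

lemma re_star_dotProduct_map_ofReal_mulVec (M : Matrix ι ι ℝ) (x : ι → ℂ) :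
    (star x ⬝ᵥ M.map Complex.ofReal *ᵥ x).re =
      (fun i ↦ (x i).re) ⬝ᵥ M *ᵥ (fun i ↦ (x i).re) +
        (fun i ↦ (x i).im) ⬝ᵥ M *ᵥ (fun i ↦ (x i).im) := by
  simp only [dotProduct, mulVec, Complex.re_sum, Finset.mul_sum, ← Finset.sum_add_distrib]
  refine Finset.sum_congr rfl fun i _ ↦ Finset.sum_congr rfl fun j _ ↦ ?_
  simp only [Pi.star_apply, Complex.star_def, map_apply, Complex.mul_re, Complex.conj_re,
    Complex.conj_im, Complex.ofReal_re, Complex.ofReal_im, Complex.im_ofReal_mul]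
  ring

theorem PosDef.map_ofReal {M : Matrix ι ι ℝ} (hM : M.PosDef) :
    (M.map Complex.ofReal).PosDef := by
  have hH : (M.map Complex.ofReal).IsHermitian := hM.isHermitian.map _ fun _ ↦ by simp
  refine of_dotProduct_mulVec_pos hH fun x hx ↦
    RCLike.pos_iff.mpr ⟨?_, hH.im_star_dotProduct_mulVec_self x⟩
  rw [RCLike.re_to_complex, re_star_dotProduct_map_ofReal_mulVec]
  have hnonneg (y : ι → ℝ) : 0 ≤ y ⬝ᵥ M *ᵥ y := by
    simpa using hM.posSemidef.dotProduct_mulVec_nonneg y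
  have hpos {y : ι → ℝ} (hy : y ≠ 0) : 0 < y ⬝ᵥ M *ᵥ y := by
    simpa using hM.dotProduct_mulVec_pos hy
  have hre_or_him : (fun i ↦ (x i).re) ≠ 0 ∨ (fun i ↦ (x i).im) ≠ 0 := by
    by_contra! h
    exact hx (funext fun i ↦ Complex.ext (congrFun h.1 i) (congrFun h.2 i))
  rcases hre_or_him with h | h
  · exact add_pos_of_pos_of_nonneg (hpos h) (hnonneg _)
  · exact add_pos_of_nonneg_of_pos (hnonneg _) (hpos h)

variable {𝕜 : Type*} [RCLike 𝕜]

lemma re_star_dotProduct_mulVec_self_eq_zero {A : Matrix ι ι 𝕜} (hA : Aᴴ = -A) (x : ι → 𝕜) :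
    RCLike.re (star x ⬝ᵥ A *ᵥ x) = 0 := by
  have h : star (star x ⬝ᵥ A *ᵥ x) = -(star x ⬝ᵥ A *ᵥ x) := by
    rw [← star_dotProduct_star, star_star, star_mulVec, ← dotProduct_mulVec, hA, neg_mulVec,
      dotProduct_neg]
  have h_re := congrArg RCLike.re h
  simp only [RCLike.star_def, RCLike.conj_re, map_neg] at h_re
  linarith

lemma re_eq_zero_of_mem_spectrum_mul_posDef [DecidableEq ι] {A B : Matrix ι ι 𝕜}
    (hA : Aᴴ = -A) (hB : B.PosDef) {μ : 𝕜} (hμ : μ ∈ spectrum 𝕜 (A * B)) : RCLike.re μ = 0 := by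
  obtain ⟨v, hv, hABv⟩ := exists_mulVec_eq_smul_of_mem_spectrum hμ
  have hquad : star (B *ᵥ v) ⬝ᵥ A *ᵥ (B *ᵥ v) = μ * (star v ⬝ᵥ B *ᵥ v) := by
    rw [mulVec_mulVec, hABv, dotProduct_smul, star_mulVec, ← dotProduct_mulVec,
      hB.isHermitian.eq, smul_eq_mul]
  obtain ⟨hre, him⟩ := RCLike.pos_iff.mp (hB.dotProduct_mulVec_pos hv)
  have h := re_star_dotProduct_mulVec_self_eq_zero hA (B *ᵥ v)
  rw [hquad, RCLike.mul_re, him, mul_zero, sub_zero] at h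
  exact (mul_eq_zero.mp h).resolve_right hre.ne'

end Matrix

theorem stdJ_conjTranspose (n : ℕ) : (stdJ n)ᴴ = -stdJ n := by
  simp [stdJ, fromBlocks_neg, fromBlocks_transpose]

theorem stdJ_mul_self (n : ℕ) : stdJ n * stdJ n = -1 := by
  simp [stdJ, fromBlocks_multiply, ← fromBlocks_one, fromBlocks_neg]

theorem isUnit_stdJ (n : ℕ) : IsUnit (stdJ n) :=
  .of_mul_eq_one (-stdJ n) (by rw [mul_neg, stdJ_mul_self, neg_neg])

theorem eigenvalues_JM_purely_imaginary_general {n : ℕ}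
    (M : Matrix (Fin n ⊕ Fin n) (Fin n ⊕ Fin n) ℝ) (hM : M.PosDef) :
    ∀ μ ∈ spectrum ℂ ((stdJ n * M).map Complex.ofReal),
      μ.re = 0 ∧ μ ≠ 0 := by
  intro μ hμ
  have hJ : ((stdJ n).map Complex.ofReal)ᴴ = -(stdJ n).map Complex.ofReal := by
    rw [← conjTranspose_map _ fun _ ↦ by simp, stdJ_conjTranspose,
      Matrix.map_neg _ Complex.ofReal_neg]
  refine ⟨re_eq_zero_of_mem_spectrum_mul_posDef hJ hM.map_ofReal ?_, ?_⟩
  · rwa [← map_ofReal_mul]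
  · rintro rfl
    exact spectrum.zero_notMem ℂ
      (((isUnit_stdJ n).mul hM.isUnit).map Complex.ofRealHom.mapMatrix) hμ

/-- For a real symmetric positive-definite `M`, every complex eigenvalue of `JM`
is purely imaginary and nonzero, i.e. of the form `± i λ` with `λ > 0`. -/
theorem eigenvalues_JM_purely_imaginary {n : ℕ} (hn : 1 ≤ n)
    (M : Matrix (Fin n ⊕ Fin n) (Fin n ⊕ Fin n) ℝ) (hMsymm : M.IsSymm) (hM : M.PosDef) :
    ∀ μ ∈ spectrum ℂ ((stdJ n * M).map Complex.ofReal),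
      μ.re = 0 ∧ μ ≠ 0 :=
  eigenvalues_JM_purely_imaginary_general M hM
end
end

section
/- Let ħ > 0 and let X and Y be real symmetric n×n matrices with X positive definite. Let M_F = (1/Tr X) · ((X² + Y², Y),(Y, I)) and let λ₁,…,λₙ be the eigenvalues of X (with multiplicity). Then there exists a symplectic matrix P ∈ Sp(2n,ℝ) such that the Fermi ellipsoid W_F = {z ∈ ℝ²ⁿ : ⟨M_F z, z⟩ ≤ ħ} equals the image under P of the set {(x,p) ∈ ℝⁿ×ℝⁿ : Σ_{j=1}^n λⱼ(xⱼ² + pⱼ²) ≤ ħ·Tr X}. -/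
open Matrix

noncomputable section

lemma quad_conj {m : Type*} [Fintype m] (M N : Matrix m m ℝ) (v : m → ℝ) :
    (Nᵀ * M * N).mulVec v ⬝ᵥ v = M.mulVec (N.mulVec v) ⬝ᵥ (N.mulVec v) := by
  rw [← mulVec_mulVec, ← mulVec_mulVec, mulVec_transpose, ← dotProduct_mulVec]

lemma fb_congr {l m o p α : Type*} {A A' : Matrix l m α} {B B' : Matrix l o α}
    {C C' : Matrix p m α} {D D' : Matrix p o α}
    (h1 : A = A') (h2 : B = B') (h3 : C = C') (h4 : D = D') :
    fromBlocks A B C D = fromBlocks A' B' C' D' := by rw [h1, h2, h3, h4]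

/-- There are symplectic coordinates in which the Fermi ellipsoid
`W_F : ⟨M_F z, z⟩ ≤ ħ`, with `M_F = (1/Tr X)((X² + Y², Y),(Y, I))`, is given by
`Σⱼ λⱼ (xⱼ² + pⱼ²) ≤ ħ Tr X` where `λ₁, …, λₙ` are the eigenvalues of `X`. -/
theorem fermi_ellipsoid_normal_form {n : ℕ} (hn : 1 ≤ n) (hb : ℝ) (hhb : 0 < hb)
    (X Y : Matrix (Fin n) (Fin n) ℝ) (hXsymm : X.IsSymm) (hYsymm : Y.IsSymm)
    (hX : X.PosDef)
    (MF : Matrix (Fin n ⊕ Fin n) (Fin n ⊕ Fin n) ℝ)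
    (hMF : MF = (X.trace)⁻¹ • Matrix.fromBlocks (X * X + Y * Y) Y Y 1) :
    ∃ P : Matrix (Fin n ⊕ Fin n) (Fin n ⊕ Fin n) ℝ, IsSymplectic P ∧
      {z : (Fin n ⊕ Fin n) → ℝ | MF.mulVec z ⬝ᵥ z ≤ hb} =
        (fun z => P.mulVec z) ''
          {z : (Fin n ⊕ Fin n) → ℝ |
            ∑ j : Fin n, hX.1.eigenvalues j * ((z (Sum.inl j)) ^ 2 + (z (Sum.inr j)) ^ 2) ≤
              hb * X.trace} := by
  classical
  set lam : Fin n → ℝ := hX.1.eigenvalues with hlam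
  have hlampos : ∀ j, 0 < lam j := hX.eigenvalues_pos
  set U : Matrix (Fin n) (Fin n) ℝ := (hX.1.eigenvectorUnitary : Matrix (Fin n) (Fin n) ℝ)
    with hUdef
  have hU2 : U * Uᵀ = 1 := by
    have := (Matrix.mem_unitaryGroup_iff).mp (hX.1.eigenvectorUnitary).2
    simpa [Matrix.star_eq_conjTranspose, conjTranspose_eq_transpose_of_trivial] using this
  have hU1 : Uᵀ * U = 1 := by
    rw [mul_eq_one_comm] at hU2; exact hU2
  have hspec : X = U * diagonal lam * Uᵀ := by
    have h := hX.1.spectral_theorem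
    simpa [RCLike.ofReal_real_eq_id, Matrix.star_eq_conjTranspose,
      conjTranspose_eq_transpose_of_trivial] using h
  -- trace
  have htr : X.trace = ∑ j, lam j := by
    rw [hspec, trace_mul_cycle, hU1, Matrix.one_mul, trace_diagonal]
  have ht : 0 < X.trace := by
    rw [htr]
    have : Nonempty (Fin n) := ⟨⟨0, hn⟩⟩
    exact Finset.sum_pos (fun j _ => hlampos j) Finset.univ_nonempty
  -- square roots
  set a : Fin n → ℝ := fun j => Real.sqrt (lam j) with hadef
  have ha : ∀ j, 0 < a j := fun j => Real.sqrt_pos.mpr (hlampos j)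
  have ha2 : ∀ j, a j * a j = lam j := fun j => Real.mul_self_sqrt (hlampos j).le
  set A : Matrix (Fin n) (Fin n) ℝ := diagonal (fun j => (a j)⁻¹) with hAdef
  set Da : Matrix (Fin n) (Fin n) ℝ := diagonal a with hDadef
  have hAD : A * Da = 1 := by
    rw [hAdef, hDadef, diagonal_mul_diagonal]
    convert diagonal_one using 2
    exact funext fun j => inv_mul_cancel₀ (ha j).ne'
  have hDA : Da * A = 1 := by rw [mul_eq_one_comm] at hAD; exact hAD
  have hAt : Aᵀ = A := diagonal_transpose _
  have hDat : Daᵀ = Da := diagonal_transpose _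
  set P : Matrix (Fin n ⊕ Fin n) (Fin n ⊕ Fin n) ℝ :=
    fromBlocks (U * A) 0 (-(Y * U * A)) (U * Da) with hPdef
  have hPt : Pᵀ = fromBlocks (A * Uᵀ) (-(A * (Uᵀ * Y))) 0 (Da * Uᵀ) := by
    rw [hPdef, fromBlocks_transpose]
    refine fb_congr ?_ ?_ ?_ ?_
    · rw [transpose_mul, hAt]
    · rw [transpose_neg, transpose_mul, transpose_mul, hAt, hYsymm.eq]
    · exact transpose_zero
    · rw [transpose_mul, hDat]
  -- symplectic
  have hsymp : IsSymplectic P := by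
    unfold IsSymplectic stdJ
    rw [hPt, hPdef, fromBlocks_multiply, fromBlocks_multiply]
    refine fb_congr ?_ ?_ ?_ ?_
    · noncomm_ring
    · rw [show (A * Uᵀ * 0 + -(A * (Uᵀ * Y)) * (-1)) * 0 +
          (A * Uᵀ * 1 + -(A * (Uᵀ * Y)) * 0) * (U * Da) = A * (Uᵀ * U) * Da by noncomm_ring,
        hU1, Matrix.mul_one, hAD]
    · rw [show (0 * 0 + Da * Uᵀ * (-1)) * (U * A) +
          (0 * 1 + Da * Uᵀ * 0) * (-(Y * U * A)) = -(Da * (Uᵀ * U) * A) by noncomm_ring,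
        hU1, Matrix.mul_one, hDA]
    · noncomm_ring
  -- conjugated matrix
  have hUXU : Uᵀ * X * U = diagonal lam := by
    rw [hspec]
    rw [show Uᵀ * (U * diagonal lam * Uᵀ) * U
        = (Uᵀ * U) * diagonal lam * (Uᵀ * U) by noncomm_ring, hU1]
    simp
  have hXXU : Uᵀ * (X * X) * U = diagonal lam * diagonal lam := by
    have e : Uᵀ * (X * X) * U = (Uᵀ * X * U) * (Uᵀ * X * U) := by
      calc Uᵀ * (X * X) * U = Uᵀ * X * (U * Uᵀ) * X * U := by rw [hU2]; noncomm_ring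
        _ = (Uᵀ * X * U) * (Uᵀ * X * U) := by noncomm_ring
    rw [e, hUXU]
  have hconj : Pᵀ * (fromBlocks (X * X + Y * Y) Y Y 1) * P
      = fromBlocks (diagonal lam) 0 0 (diagonal lam) := by
    rw [hPt, hPdef, fromBlocks_multiply, fromBlocks_multiply]
    refine fb_congr ?_ ?_ ?_ ?_
    · rw [show (A * Uᵀ * (X * X + Y * Y) + -(A * (Uᵀ * Y)) * Y) * (U * A) +
          (A * Uᵀ * Y + -(A * (Uᵀ * Y)) * 1) * -(Y * U * A)
          = A * (Uᵀ * (X * X) * U) * A by noncomm_ring, hXXU]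
      rw [hAdef, diagonal_mul_diagonal, diagonal_mul_diagonal, diagonal_mul_diagonal]
      refine congrArg diagonal (funext fun j => ?_)
      rw [← ha2 j]
      have := (ha j).ne'
      field_simp
    · noncomm_ring
    · noncomm_ring
    · rw [show (0 * (X * X + Y * Y) + Da * Uᵀ * Y) * 0 + (0 * Y + Da * Uᵀ * 1) * (U * Da)
          = Da * (Uᵀ * U) * Da by noncomm_ring, hU1, Matrix.mul_one, hDadef,
        diagonal_mul_diagonal]
      exact congrArg diagonal (funext ha2)
  -- inverse of P
  have hJJ : stdJ n * stdJ n = -1 := by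
    unfold stdJ
    rw [fromBlocks_multiply, ← fromBlocks_one, fromBlocks_neg]
    exact fb_congr (by simp) (by simp) (by simp) (by simp)
  set Q : Matrix (Fin n ⊕ Fin n) (Fin n ⊕ Fin n) ℝ := -(stdJ n) * Pᵀ * stdJ n with hQdef
  have hQP : Q * P = 1 := by
    calc Q * P = -(stdJ n) * (Pᵀ * stdJ n * P) := by rw [hQdef]; noncomm_ring
      _ = -(stdJ n * stdJ n) := by rw [hsymp]; noncomm_ring
      _ = 1 := by rw [hJJ]; simp
  have hPQ : P * Q = 1 := (mul_eq_one_comm).mp hQP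
  -- the quadratic form identity
  have hdiag : ∀ (d : (Fin n ⊕ Fin n) → ℝ) (v : (Fin n ⊕ Fin n) → ℝ),
      (diagonal d).mulVec v ⬝ᵥ v = ∑ i, d i * (v i * v i) := by
    intro d v
    simp [dotProduct, mulVec_diagonal, mul_assoc]
  have hquad : ∀ v : (Fin n ⊕ Fin n) → ℝ, MF.mulVec (P.mulVec v) ⬝ᵥ (P.mulVec v)
      = (X.trace)⁻¹ * ∑ j, lam j * ((v (Sum.inl j)) ^ 2 + (v (Sum.inr j)) ^ 2) := by
    intro v
    rw [← quad_conj MF P v, hMF,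
      show Pᵀ * ((X.trace)⁻¹ • fromBlocks (X * X + Y * Y) Y Y 1) * P
        = (X.trace)⁻¹ • (Pᵀ * fromBlocks (X * X + Y * Y) Y Y 1 * P) by
          rw [Matrix.mul_smul, Matrix.smul_mul],
      hconj, fromBlocks_diagonal, smul_mulVec, smul_dotProduct, smul_eq_mul]
    congr 1
    rw [hdiag, Fintype.sum_sum_type, ← Finset.sum_add_distrib]
    refine Finset.sum_congr rfl fun j _ => ?_
    simp only [Sum.elim_inl, Sum.elim_inr]
    ring
  refine ⟨P, hsymp, ?_⟩
  ext z
  simp only [Set.mem_setOf_eq, Set.mem_image]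
  constructor
  · intro hz
    have hPz : P.mulVec (Q.mulVec z) = z := by
      rw [mulVec_mulVec, hPQ, one_mulVec]
    refine ⟨Q.mulVec z, ?_, hPz⟩
    have hq := hquad (Q.mulVec z)
    rw [hPz] at hq
    have h2 : (X.trace)⁻¹ *
        (∑ j, lam j * ((Q.mulVec z (Sum.inl j)) ^ 2 + (Q.mulVec z (Sum.inr j)) ^ 2)) ≤ hb := by
      rw [← hq]; exact hz
    have h3 := mul_le_mul_of_nonneg_left h2 ht.le
    rw [← mul_assoc, mul_inv_cancel₀ ht.ne', one_mul] at h3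
    linarith
  · rintro ⟨v, hv, rfl⟩
    rw [hquad v]
    have h2 : (X.trace)⁻¹ *
        (∑ j, lam j * ((v (Sum.inl j)) ^ 2 + (v (Sum.inr j)) ^ 2))
        ≤ (X.trace)⁻¹ * (hb * X.trace) :=
      mul_le_mul_of_nonneg_left hv (inv_nonneg.mpr ht.le)
    calc (X.trace)⁻¹ * ∑ j, lam j * ((v (Sum.inl j)) ^ 2 + (v (Sum.inr j)) ^ 2)
        ≤ (X.trace)⁻¹ * (hb * X.trace) := h2
      _ = hb := by field_simp
end
end

section
/- Let ħ > 0 and let X and Y be real symmetric n×n matrices with X positive definite, and let M_F = (1/Tr X) · ((X² + Y², Y),(Y, I)). Then the Fermi ellipsoid W_F = {z ∈ ℝ²ⁿ : ⟨M_F z, z⟩ ≤ ħ} contains a quantum blob: there exists S ∈ Sp(2n,ℝ) such that the image under S of the closed ball of radius √ħ centered at the origin is contained in W_F. -/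
/-!
Write `M_F = (Tr X)⁻¹ RᵀR` with `R = ((X, 0), (Y, I))`. With `c = √(Tr X)`, the lower
block-triangular matrix `S = ((c X⁻¹, 0), (-c Y X⁻¹, c⁻¹ X))` is symplectic because `X` and `Y`
are symmetric, and `R S = diag(c I, c⁻¹ X)`. Hence for `z = (u, v)`,
`⟨M_F S z, S z⟩ = |u|² + |X v|² / (Tr X)²`, and this is at most `|z|²` because a positive
semidefinite `X` satisfies `|X v| ≤ ‖X‖_F |v| ≤ Tr X |v|` (from `X_ij² ≤ X_ii X_jj`).
-/

open Matrix

noncomputable section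

namespace Matrix

variable {ι : Type*} [Fintype ι]

lemma PosSemidef.sq_apply_le_mul_apply_diag [DecidableEq ι] {X : Matrix ι ι ℝ}
    (hX : X.PosSemidef) (i j : ι) : X i j ^ 2 ≤ X i i * X j j := by
  have hji : X j i = X i j := hX.isHermitian.apply i j
  have hquad : ∀ s : ℝ, 0 ≤ X j j * (s * s) + 2 * X i j * s + X i i := fun s => by
    have h := hX.dotProduct_mulVec_nonneg (Pi.single i 1 + Pi.single j s)
    simp [mulVec_add, add_dotProduct, dotProduct_add, hji] at h
    linarith
  have := discrim_le_zero hquad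
  rw [discrim] at this
  nlinarith

lemma PosSemidef.sum_sq_apply_le_trace_sq [DecidableEq ι] {X : Matrix ι ι ℝ}
    (hX : X.PosSemidef) : ∑ i, ∑ j, X i j ^ 2 ≤ X.trace ^ 2 := by
  rw [trace, sq, Finset.sum_mul_sum]
  exact Finset.sum_le_sum fun i _ => Finset.sum_le_sum fun j _ =>
    hX.sq_apply_le_mul_apply_diag i j

lemma PosSemidef.mulVec_dotProduct_mulVec_self_le [DecidableEq ι] {X : Matrix ι ι ℝ}
    (hX : X.PosSemidef) (v : ι → ℝ) :
    (X *ᵥ v) ⬝ᵥ (X *ᵥ v) ≤ X.trace ^ 2 * (v ⬝ᵥ v) :=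
  calc (X *ᵥ v) ⬝ᵥ (X *ᵥ v) = ∑ i, (∑ j, X i j * v j) ^ 2 := by
        simp only [dotProduct, mulVec, sq]
    _ ≤ ∑ i, (∑ j, X i j ^ 2) * ∑ j, v j ^ 2 :=
        Finset.sum_le_sum fun i _ => Finset.sum_mul_sq_le_sq_mul_sq _ _ _
    _ = (∑ i, ∑ j, X i j ^ 2) * (v ⬝ᵥ v) := by
        simp only [← Finset.sum_mul, dotProduct, sq]
    _ ≤ X.trace ^ 2 * (v ⬝ᵥ v) :=
        mul_le_mul_of_nonneg_right hX.sum_sq_apply_le_trace_sq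
          (Finset.sum_nonneg fun j _ => mul_self_nonneg (v j))

lemma transpose_mul_self_mulVec_dotProduct_s14 {κ : Type*} [Fintype κ] (R : Matrix κ ι ℝ)
    (z : ι → ℝ) : (Rᵀ * R) *ᵥ z ⬝ᵥ z = (R *ᵥ z) ⬝ᵥ (R *ᵥ z) := by
  rw [← mulVec_mulVec, dotProduct_comm, dotProduct_mulVec, vecMul_transpose]

lemma fromBlocks_zero_zero_mulVec_sumElim_dotProduct_self {κ : Type*} [Fintype κ]
    (A : Matrix ι ι ℝ) (D : Matrix κ κ ℝ) (u : ι → ℝ) (v : κ → ℝ) :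
    (fromBlocks A 0 0 D *ᵥ Sum.elim u v) ⬝ᵥ (fromBlocks A 0 0 D *ᵥ Sum.elim u v) =
      (A *ᵥ u) ⬝ᵥ (A *ᵥ u) + (D *ᵥ v) ⬝ᵥ (D *ᵥ v) := by
  simp only [fromBlocks_mulVec, zero_mulVec, add_zero, zero_add, Sum.elim_comp_inl,
    Sum.elim_comp_inr, sumElim_dotProduct_sumElim]

end Matrix

lemma isSymplectic_fromBlocks_zero {n : ℕ} (A C D : Matrix (Fin n) (Fin n) ℝ)
    (hAD : Aᵀ * D = 1) (hAC : Cᵀ * A = Aᵀ * C) : IsSymplectic (fromBlocks A 0 C D) := by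
  have hDA : Dᵀ * A = 1 := by rw [← transpose_transpose A, ← transpose_mul, hAD, transpose_one]
  unfold IsSymplectic stdJ
  simp [fromBlocks_transpose, fromBlocks_multiply, hAD, hDA, hAC]

lemma image_sqrt_ball_subset_of_forall {ι : Type*} [Fintype ι] (M S : Matrix ι ι ℝ) {hb : ℝ}
    (hhb : 0 ≤ hb) (hMS : ∀ z, M *ᵥ (S *ᵥ z) ⬝ᵥ (S *ᵥ z) ≤ z ⬝ᵥ z) :
    (fun z => S *ᵥ z) '' {z : ι → ℝ | √(z ⬝ᵥ z) ≤ √hb} ⊆ {z | M *ᵥ z ⬝ᵥ z ≤ hb} := by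
  rintro _ ⟨z, hz, rfl⟩
  exact (hMS z).trans ((Real.sqrt_le_sqrt_iff hhb).mp hz)

section Fermi

variable {n : ℕ} (X Y : Matrix (Fin n) (Fin n) ℝ)

def fermiSymplectic (c : ℝ) : Matrix (Fin n ⊕ Fin n) (Fin n ⊕ Fin n) ℝ :=
  fromBlocks (c • X⁻¹) 0 (-(c • (Y * X⁻¹))) (c⁻¹ • X)

variable {X Y}

lemma isSymplectic_fermiSymplectic (hX : IsUnit X.det) (hXs : X.IsSymm) (hYs : Y.IsSymm)
    {c : ℝ} (hc : c ≠ 0) : IsSymplectic (fermiSymplectic X Y c) := by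
  have hXinvT : (X⁻¹)ᵀ = X⁻¹ := by rw [transpose_nonsing_inv, hXs.eq]
  apply isSymplectic_fromBlocks_zero
  · simp [hXinvT, nonsing_inv_mul X hX, smul_smul, hc]
  · simp only [transpose_neg, transpose_smul, transpose_mul, hXinvT, hYs.eq, mul_neg, neg_mul,
      Matrix.mul_smul, Matrix.smul_mul, Matrix.mul_assoc]

lemma fromBlocks_mul_fermiSymplectic (hX : IsUnit X.det) (c : ℝ) :
    fromBlocks X 0 Y 1 * fermiSymplectic X Y c = fromBlocks (c • 1) 0 0 (c⁻¹ • X) := by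
  simp [fermiSymplectic, fromBlocks_multiply, mul_nonsing_inv X hX]

lemma fromBlocks_transpose_mul_fromBlocks (hXs : X.IsSymm) (hYs : Y.IsSymm) :
    (fromBlocks X 0 Y 1)ᵀ * fromBlocks X 0 Y 1 = fromBlocks (X * X + Y * Y) Y Y 1 := by
  simp [fromBlocks_transpose, fromBlocks_multiply, hXs.eq, hYs.eq]

lemma fermi_quadForm_fermiSymplectic_le (hX : X.PosDef) (hYs : Y.IsSymm) (ht : 0 < X.trace)
    (z : Fin n ⊕ Fin n → ℝ) :
    (X.trace⁻¹ • fromBlocks (X * X + Y * Y) Y Y 1) *ᵥ (fermiSymplectic X Y √X.trace *ᵥ z) ⬝ᵥ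
      (fermiSymplectic X Y √X.trace *ᵥ z) ≤ z ⬝ᵥ z := by
  have hXs : X.IsSymm := isHermitian_iff_isSymm.mp hX.isHermitian
  have hdet : IsUnit X.det := (isUnit_iff_isUnit_det X).mp hX.isUnit
  obtain ⟨u, v, rfl⟩ : ∃ u v, z = Sum.elim u v := ⟨_, _, (Sum.elim_comp_inl_inr z).symm⟩
  have hform : (X.trace⁻¹ • fromBlocks (X * X + Y * Y) Y Y 1) *ᵥ
      (fermiSymplectic X Y √X.trace *ᵥ Sum.elim u v) ⬝ᵥ
        (fermiSymplectic X Y √X.trace *ᵥ Sum.elim u v) =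
          u ⬝ᵥ u + (X *ᵥ v) ⬝ᵥ (X *ᵥ v) / X.trace ^ 2 := by
    rw [← fromBlocks_transpose_mul_fromBlocks hXs hYs, smul_mulVec, smul_dotProduct,
      transpose_mul_self_mulVec_dotProduct_s14, mulVec_mulVec, fromBlocks_mul_fermiSymplectic hdet,
      fromBlocks_zero_zero_mulVec_sumElim_dotProduct_self]
    simp only [smul_mulVec, one_mulVec, smul_dotProduct, dotProduct_smul, smul_eq_mul]
    field_simp
    rw [show √X.trace ^ 4 = (√X.trace ^ 2) ^ 2 by ring, Real.sq_sqrt ht.le]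
  have hXv := hX.posSemidef.mulVec_dotProduct_mulVec_self_le v
  rw [hform, sumElim_dotProduct_sumElim]
  gcongr
  exact (div_le_iff₀' (by positivity)).mpr hXv

end Fermi

theorem fermi_ellipsoid_contains_quantum_blob_general {n : ℕ} (hn : 1 ≤ n) (hb : ℝ) (hhb : 0 < hb)
    (X Y : Matrix (Fin n) (Fin n) ℝ) (hYsymm : Y.IsSymm)
    (hX : X.PosDef)
    (MF : Matrix (Fin n ⊕ Fin n) (Fin n ⊕ Fin n) ℝ)
    (hMF : MF = (X.trace)⁻¹ • Matrix.fromBlocks (X * X + Y * Y) Y Y 1) :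
    ∃ S : Matrix (Fin n ⊕ Fin n) (Fin n ⊕ Fin n) ℝ, IsSymplectic S ∧
      (fun z => S.mulVec z) ''
          {z : (Fin n ⊕ Fin n) → ℝ | Real.sqrt (z ⬝ᵥ z) ≤ Real.sqrt hb} ⊆
        {z : (Fin n ⊕ Fin n) → ℝ | MF.mulVec z ⬝ᵥ z ≤ hb} := by
  have : Nonempty (Fin n) := ⟨⟨0, hn⟩⟩
  have ht : 0 < X.trace := hX.trace_pos
  subst hMF
  refine ⟨fermiSymplectic X Y √X.trace, ?_,
    image_sqrt_ball_subset_of_forall _ _ hhb.le (fermi_quadForm_fermiSymplectic_le hX hYsymm ht)⟩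
  exact isSymplectic_fermiSymplectic ((isUnit_iff_isUnit_det X).mp hX.isUnit)
    (isHermitian_iff_isSymm.mp hX.isHermitian) hYsymm (Real.sqrt_pos.mpr ht).ne'

/-- The Fermi ellipsoid `W_F : ⟨M_F z, z⟩ ≤ ħ`, with
`M_F = (1/Tr X)((X² + Y², Y),(Y, I))`, contains a quantum blob: the image of the
closed ball of radius `√ħ` centered at the origin under some symplectic matrix. -/
theorem fermi_ellipsoid_contains_quantum_blob {n : ℕ} (hn : 1 ≤ n) (hb : ℝ) (hhb : 0 < hb)
    (X Y : Matrix (Fin n) (Fin n) ℝ) (hXsymm : X.IsSymm) (hYsymm : Y.IsSymm)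
    (hX : X.PosDef)
    (MF : Matrix (Fin n ⊕ Fin n) (Fin n ⊕ Fin n) ℝ)
    (hMF : MF = (X.trace)⁻¹ • Matrix.fromBlocks (X * X + Y * Y) Y Y 1) :
    ∃ S : Matrix (Fin n ⊕ Fin n) (Fin n ⊕ Fin n) ℝ, IsSymplectic S ∧
      (fun z => S.mulVec z) ''
          {z : (Fin n ⊕ Fin n) → ℝ | Real.sqrt (z ⬝ᵥ z) ≤ Real.sqrt hb} ⊆
        {z : (Fin n ⊕ Fin n) → ℝ | MF.mulVec z ⬝ᵥ z ≤ hb} :=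
  fermi_ellipsoid_contains_quantum_blob_general hn hb hhb X Y hYsymm hX MF hMF
end
end
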